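/- Let (X,σ) be a subshift and let [σ] denote the full group of σ, i.e. the group of all maps φ: X → X for which there exists k: X → ℤ with φ(x) = σ^{k(x)}(x) for all x ∈ X. Then Aut(X) ∩ [σ], the group of orbit-preserving automorphisms, is a normal abelian subgroup of Aut(X). -/

import Mathlib

open Filter Topology Pointwise

section Defs

variable {A : Type*}

/-- The left shift on bi-infinite sequences over `A`. -/
def shift (x : ℤ → A) : ℤ → A := fun i => x (i + 1)

/-- The word `w` occurs in `x` at position `j`. -/
def OccursAt {n : ℕ} (x : ℤ → A) (w : Fin n → A) (j : ℤ) : Prop :=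
  ∀ i : Fin n, x (j + (i : ℤ)) = w i

/-- The word `w` belongs to the language of `X`. -/
def InLanguage (X : Set (ℤ → A)) {n : ℕ} (w : Fin n → A) : Prop :=
  ∃ x ∈ X, OccursAt x w 0

/-- The complexity function of `X`: the number of words of length `n` in the language. -/
noncomputable def complexity (X : Set (ℤ → A)) (n : ℕ) : ℕ :=
  {w : Fin n → A | InLanguage X w}.ncard

/-- `x` is aperiodic: no positive shift fixes it. -/
def IsAperiodic (x : ℤ → A) : Prop := ∀ p : ℤ, 0 < p → (fun i => x (i + p)) ≠ x

/-- The subshift obtained from `X` by forbidding the word `w`. -/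
def Forbid (X : Set (ℤ → A)) {n : ℕ} (w : Fin n → A) : Set (ℤ → A) :=
  {x ∈ X | ∀ j : ℤ, ¬ OccursAt x w j}

/-- `w` extends uniquely `L` times to the right and left in the language of `X`. -/
def ExtendsUniquely (X : Set (ℤ → A)) {n : ℕ} (w : Fin n → A) (L : ℕ) : Prop :=
  ∃! u : Fin (n + 2 * L) → A,
    InLanguage X u ∧ ∀ i : Fin n, u ⟨L + (i : ℕ), by have := i.isLt; omega⟩ = w i

variable [TopologicalSpace A]

/-- The automorphism group of a subshift `X`: permutations of `X` which are homeomorphisms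
and commute with the shift. -/
def Aut (X : Set (ℤ → A)) : Subgroup (Equiv.Perm ↥X) where
  carrier := {φ | Continuous ⇑φ ∧ Continuous ⇑φ.symm ∧
    (∀ x y : ↥X, shift (x : ℤ → A) = (y : ℤ → A) →
      shift ((φ x : ℤ → A)) = ((φ y : ℤ → A))) ∧
    (∀ x y : ↥X, shift (x : ℤ → A) = (y : ℤ → A) →
      shift ((φ.symm x : ℤ → A)) = ((φ.symm y : ℤ → A)))}
  one_mem' := ⟨continuous_id, continuous_id, fun _ _ h => h, fun _ _ h => h⟩
  mul_mem' := by
    rintro a b ⟨hac, hac', haσ, haσ'⟩ ⟨hbc, hbc', hbσ, hbσ'⟩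
    refine ⟨?_, ?_, ?_, ?_⟩
    · simpa using hac.comp hbc
    · simpa [Equiv.Perm.mul_def] using hbc'.comp hac'
    · intro x y h
      simpa using haσ _ _ (hbσ x y h)
    · intro x y h
      simpa [Equiv.Perm.mul_def] using hbσ' _ _ (haσ' x y h)
  inv_mem' := by
    rintro a ⟨hac, hac', haσ, haσ'⟩
    exact ⟨hac', by simpa [Equiv.Perm.inv_def] using hac, fun x y h => haσ' x y h, fun x y h => by simpa [Equiv.Perm.inv_def] using haσ x y h⟩

/-- `f` is a block code of range `R` representing `φ`. -/
def IsBlockCode (X : Set (ℤ → A)) (R : ℕ) (φ : Equiv.Perm ↥X)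
    (f : (Fin (2 * R + 1) → A) → A) : Prop :=
  ∀ (x : ↥X) (i : ℤ), (φ x : ℤ → A) i = f (fun j => (x : ℤ → A) (i + (j : ℤ) - R))

/-- `Aut_R(X)`: automorphisms such that both they and their inverses are given by
sliding block codes of range `R`. -/
def AutR (X : Set (ℤ → A)) (R : ℕ) : Set (Equiv.Perm ↥X) :=
  {φ | φ ∈ Aut X ∧ (∃ f, IsBlockCode X R φ f) ∧ (∃ g, IsBlockCode X R φ⁻¹ g)}

end Defs

/-- Apply a block code of range `R` to a word, shortening it by `2R`. -/
def applyCode {A : Type*} {R n : ℕ} (f : (Fin (2 * R + 1) → A) → A) (w : Fin n → A) :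
    Fin (n - 2 * R) → A :=
  fun i => f (fun j => w ⟨(i : ℕ) + (j : ℕ), by have := i.isLt; have := j.isLt; omega⟩)

section Defs2

variable {A : Type*} [TopologicalSpace A]

/-- `φ` preserves occurrences of `v`. -/
def PreservesOcc (X : Set (ℤ → A)) (φ : Equiv.Perm ↥X) {n : ℕ} (v : Fin n → A) : Prop :=
  ∀ x : ↥X, OccursAt (x : ℤ → A) v 0 → OccursAt ((φ x : ℤ → A)) v 0

/-- `φ` preserves occurrences of `v` which are at least `D` units away from any occurrence of
the words `u 0, …, u (i-1)`. -/
def PreservesOccAway (X : Set (ℤ → A)) (φ : Equiv.Perm ↥X) {n : ℕ} (v : Fin n → A)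
    (D : ℕ) (ml : ℕ → ℕ) (u : ∀ t, Fin (ml t) → A) (i : ℕ) : Prop :=
  ∀ x : ↥X, OccursAt (x : ℤ → A) v 0 →
    (∀ t < i, ∀ p : ℤ, -(D : ℤ) ≤ p → p + ml t ≤ n + D → ¬ OccursAt (x : ℤ → A) (u t) p) →
    OccursAt ((φ x : ℤ → A)) v 0

end Defs2

/-- A countable discrete group is amenable if it admits a Følner sequence. -/
def FolnerAmenable (G : Type*) [Group G] : Prop :=
  ∃ F : ℕ → Set G, (∀ k, (F k).Finite) ∧
    (∀ g : G, ∀ᶠ k in atTop, g ∈ F k) ∧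
    ∀ g : G, Tendsto (fun k => ((symmDiff (g • F k) (F k)).ncard : ℝ) / ((F k).ncard : ℝ))
      atTop (𝓝 0)

/-! An automorphism commutes with every power of `σ`. Hence if `a x = σ^k x` and `b x = σ^m x`,
then `a (b x) = σ^m (a x) = σ^(k+m) x = b (a x)`, and if `h y = σ^k y` with `y = g⁻¹ x`, then
`g (h y) = σ^k (g y) = σ^k x`. -/

/-- `shiftBy k` is `σ^k`. -/
def shiftBy {A : Type*} (k : ℤ) (x : ℤ → A) : ℤ → A := fun i => x (i + k)

section ShiftBy

variable {A : Type*}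

@[simp]
lemma shiftBy_zero (x : ℤ → A) : shiftBy 0 x = x := by
  funext i; simp [shiftBy]

lemma shiftBy_shiftBy (k m : ℤ) (x : ℤ → A) : shiftBy m (shiftBy k x) = shiftBy (k + m) x := by
  funext i; simp only [shiftBy, add_comm k m, add_assoc]

lemma shift_shiftBy (k : ℤ) (x : ℤ → A) : shift (shiftBy k x) = shiftBy (k + 1) x := by
  rw [← shiftBy_shiftBy]; rfl

lemma shift_injective : Function.Injective (shift : (ℤ → A) → ℤ → A) := by
  intro x y h
  funext i
  simpa [shift] using congrFun h (i - 1)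

lemma shiftBy_mem {X : Set (ℤ → A)} (hX : shift '' X = X) (k : ℤ) {x : ℤ → A} (hx : x ∈ X) :
    shiftBy k x ∈ X := by
  induction k using Int.induction_on with
  | zero => simpa using hx
  | succ k ih =>
    rw [← shift_shiftBy, ← hX]
    exact Set.mem_image_of_mem shift ih
  | pred k ih =>
    rw [← hX] at ih
    obtain ⟨y, hy, hyk⟩ := ih
    rwa [shift_injective (hyk.trans (by rw [shift_shiftBy, sub_add_cancel]))] at hy

lemma map_shiftBy_of_map_shift {X : Set (ℤ → A)} (hX : shift '' X = X) (f : ↥X → ↥X)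
    (hf : ∀ x y : ↥X, shift (x : ℤ → A) = y → shift (f x : ℤ → A) = f y) (k : ℤ) (x y : ↥X)
    (hxy : (y : ℤ → A) = shiftBy k x) : (f y : ℤ → A) = shiftBy k (f x) := by
  induction k using Int.induction_on generalizing y with
  | zero =>
    obtain rfl : y = x := Subtype.ext (by simpa using hxy)
    simp
  | succ k ih =>
    let z : ↥X := ⟨shiftBy k x, shiftBy_mem hX k x.2⟩
    rw [← hf z y (by rw [hxy]; exact shift_shiftBy k (x : ℤ → A)), ih z rfl, shift_shiftBy]
  | pred k ih =>
    let z : ↥X := ⟨shiftBy (-k) x, shiftBy_mem hX _ x.2⟩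
    have hyz : shift (y : ℤ → A) = z := by rw [hxy, shift_shiftBy, sub_add_cancel]
    apply shift_injective
    rw [hf y z hyz, ih z rfl, shift_shiftBy, sub_add_cancel]

end ShiftBy

section OrbitPreserving

variable {A : Type*} [TopologicalSpace A] {X : Set (ℤ → A)}

lemma Aut.apply_shiftBy (hX : shift '' X = X) {φ : Equiv.Perm ↥X} (hφ : φ ∈ Aut X) (k : ℤ)
    {x y : ↥X} (hxy : (y : ℤ → A) = shiftBy k x) : (φ y : ℤ → A) = shiftBy k (φ x) :=
  map_shiftBy_of_map_shift hX φ hφ.2.2.1 k x y hxy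

/-- The group `Aut(X) ∩ [σ]`. -/
def orbitPreservingAut (hX : shift '' X = X) : Subgroup (Equiv.Perm ↥X) where
  carrier := {φ | φ ∈ Aut X ∧ ∀ x : ↥X, ∃ k : ℤ, (φ x : ℤ → A) = shiftBy k x}
  one_mem' := ⟨(Aut X).one_mem, fun x => ⟨0, (shiftBy_zero _).symm⟩⟩
  mul_mem' := by
    rintro a b ⟨ha, hka⟩ ⟨hb, hkb⟩
    refine ⟨(Aut X).mul_mem ha hb, fun x => ?_⟩
    obtain ⟨k, hk⟩ := hka x
    obtain ⟨m, hm⟩ := hkb x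
    exact ⟨k + m, by rw [Equiv.Perm.mul_apply, Aut.apply_shiftBy hX ha m hm, hk, shiftBy_shiftBy]⟩
  inv_mem' := by
    rintro a ⟨ha, hka⟩
    refine ⟨(Aut X).inv_mem ha, fun x => ?_⟩
    obtain ⟨k, hk⟩ := hka (a⁻¹ x)
    rw [← Equiv.Perm.mul_apply, mul_inv_cancel, Equiv.Perm.one_apply] at hk
    exact ⟨-k, by rw [hk, shiftBy_shiftBy, add_neg_cancel, shiftBy_zero]⟩

variable {hX : shift '' X = X}

lemma orbitPreservingAut_mul_comm {a b : Equiv.Perm ↥X} (ha : a ∈ orbitPreservingAut hX)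
    (hb : b ∈ orbitPreservingAut hX) : a * b = b * a := by
  ext x : 1
  obtain ⟨k, hk⟩ := ha.2 x
  obtain ⟨m, hm⟩ := hb.2 x
  apply Subtype.ext
  rw [Equiv.Perm.mul_apply, Equiv.Perm.mul_apply, Aut.apply_shiftBy hX ha.1 m hm,
    Aut.apply_shiftBy hX hb.1 k hk, hk, hm, shiftBy_shiftBy, shiftBy_shiftBy, add_comm]

lemma conj_mem_orbitPreservingAut {g h : Equiv.Perm ↥X} (hg : g ∈ Aut X)
    (hh : h ∈ orbitPreservingAut hX) : g * h * g⁻¹ ∈ orbitPreservingAut hX := by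
  refine ⟨(Aut X).mul_mem ((Aut X).mul_mem hg hh.1) ((Aut X).inv_mem hg), fun x => ?_⟩
  obtain ⟨k, hk⟩ := hh.2 (g⁻¹ x)
  refine ⟨k, ?_⟩
  rw [Equiv.Perm.mul_apply, Equiv.Perm.mul_apply, Aut.apply_shiftBy hX hg k hk,
    Equiv.Perm.coe_inv, Equiv.apply_symm_apply]

end OrbitPreserving

theorem orbitPreserving_normal_abelian_general {A : Type*} [TopologicalSpace A]
    (X : Set (ℤ → A)) (hX_inv : shift '' X = X) :
    ∃ H : Subgroup (Equiv.Perm ↥X),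
      ((H : Set (Equiv.Perm ↥X)) =
        {φ | φ ∈ Aut X ∧ ∀ x : ↥X, ∃ k : ℤ,
          (φ x : ℤ → A) = fun i => (x : ℤ → A) (i + k)}) ∧
      (∀ a ∈ H, ∀ b ∈ H, a * b = b * a) ∧
      (∀ g ∈ Aut X, ∀ h ∈ H, g * h * g⁻¹ ∈ H) :=
  ⟨orbitPreservingAut hX_inv, rfl, fun _ ha _ hb => orbitPreservingAut_mul_comm ha hb,
    fun _ hg _ hh => conj_mem_orbitPreservingAut hg hh⟩

/-- The group of orbit-preserving automorphisms `Aut(X) ∩ [σ]` — automorphisms `φ` such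
that for every `x` there is `k(x) ∈ ℤ` with `φ(x) = σ^{k(x)}(x)` — is a normal abelian
subgroup of `Aut(X)`. -/
theorem orbitPreserving_normal_abelian {A : Type*} [Fintype A] [TopologicalSpace A]
    [DiscreteTopology A] (X : Set (ℤ → A)) (hX_cl : IsClosed X) (hX_inv : shift '' X = X) :
    ∃ H : Subgroup (Equiv.Perm ↥X),
      ((H : Set (Equiv.Perm ↥X)) =
        {φ | φ ∈ Aut X ∧ ∀ x : ↥X, ∃ k : ℤ,
          (φ x : ℤ → A) = fun i => (x : ℤ → A) (i + k)}) ∧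
      (∀ a ∈ H, ∀ b ∈ H, a * b = b * a) ∧
      (∀ g ∈ Aut X, ∀ h ∈ H, g * h * g⁻¹ ∈ H) :=
  orbitPreserving_normal_abelian_general X hX_inv
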